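/- arXiv:1206.2820 — 2 statements merged into one kernel-verified Lean document; each statement's English description precedes it below -/
import Mathlib

section
/- Let n > 1, A closed in ℝ^m, and f : A → exp_n(ℝ^m) \ exp_{n-1}(ℝ^m) continuous. For a natural number m' with 1 ≤ m' ≤ n−1, the set O_{m'} = { x ∈ A : |{ y ∈ f(x) : π₁(y) = max π₁(f(x)) }| < n − m' } is open in A. -/
open Set Topology

/-- The Vietoris topology on the powerset of `Z`, generated by the sets
`{A | A ⊆ U}` and `{A | A ∩ U ≠ ∅}` for `U` open.  Its restriction to the
nonempty closed subsets of `Z` is the usual Vietoris topology on `2^Z`. -/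
def vietoris (Z : Type*) [TopologicalSpace Z] : TopologicalSpace (Set Z) :=
  TopologicalSpace.generateFrom
    ({S | ∃ U : Set Z, IsOpen U ∧ S = {A : Set Z | A ⊆ U}} ∪
     {S | ∃ U : Set Z, IsOpen U ∧ S = {A : Set Z | (A ∩ U).Nonempty}})

/-- Continuity of a set-valued map with respect to the Vietoris topology. -/
def VCont {X Z : Type*} [tX : TopologicalSpace X] [TopologicalSpace Z] (f : X → Set Z) : Prop :=
  @Continuous X (Set Z) tX (vietoris Z) f

/-- `f` is colorable by at most `N` bright colors: there is a cover of `X` by at most `N`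
closed sets `F`, each disjoint from the closure in `Z` of `⋃ x ∈ F, f x`. -/
def BrightColorable {Z : Type*} [TopologicalSpace Z] {X : Set Z}
    (f : X → Set Z) (N : ℕ) : Prop :=
  ∃ 𝓕 : Finset (Set X), 𝓕.card ≤ N ∧ (∀ x : X, ∃ F ∈ 𝓕, x ∈ F) ∧
    ∀ F ∈ 𝓕, IsClosed F ∧ Disjoint (Subtype.val '' F) (closure (⋃ x ∈ F, f x))

/-! Separate the points of `f x₀` by disjoint open sets, each on the same side of a level `c`
of `π` that splits the top points of `f x₀` from the others. By Vietoris continuity, for `x`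
near `x₀` the set `f x` lies in their union and meets each of them; as `|f x| ≤ |f x₀|`, it meets
each exactly once. A top point of `f x` then lies in the set of a top point of `f x₀`. -/

section Maximizers

variable {Z : Type*}

def maximizers (π : Z → ℝ) (s : Set Z) : Set Z :=
  {y ∈ s | π y = sSup (π '' s)}

variable {π : Z → ℝ} {s : Set Z}

theorem maximizers_subset : maximizers π s ⊆ s := sep_subset _ _

theorem le_of_mem_maximizers (hs : s.Finite) {y z : Z} (hy : y ∈ maximizers π s) (hz : z ∈ s) :
    π z ≤ π y :=
  hy.2 ▸ le_csSup (hs.image π).bddAbove (mem_image_of_mem π hz)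

theorem maximizers_nonempty (hs : s.Finite) (hne : s.Nonempty) : (maximizers π s).Nonempty := by
  obtain ⟨y, hy, hyM⟩ := (hne.image π).csSup_mem (hs.image π)
  exact ⟨y, hy, hyM⟩

theorem exists_level_between_maximizers (hs : s.Finite) :
    ∃ c, (∀ y ∈ maximizers π s, c < π y) ∧ ∀ y ∈ s \ maximizers π s, π y < c := by
  have hlt : ∀ y ∈ s \ maximizers π s, π y < sSup (π '' s) := fun y hy =>
    (le_csSup (hs.image π).bddAbove (mem_image_of_mem π hy.1)).lt_of_ne fun h => hy.2 ⟨hy.1, h⟩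
  have : ∀ᶠ c in 𝓝[<] sSup (π '' s), c < sSup (π '' s) ∧ ∀ y ∈ s \ maximizers π s, π y < c :=
    eventually_mem_nhdsWithin.and <| nhdsWithin_le_nhds <|
      hs.sdiff.eventually_all.2 fun y hy => eventually_gt_nhds (hlt y hy)
  obtain ⟨c, hcM, hc⟩ := this.exists
  exact ⟨c, fun y hy => hy.2 ▸ hcM, hc⟩

end Maximizers

theorem Set.ncard_inter_biUnion_le {Z : Type*} {F G S : Set Z} {U : Z → Set Z}
    (hF : F.Finite) (hG : G.Finite) (hGF : G.ncard ≤ F.ncard)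
    (hmeet : ∀ y ∈ F, (G ∩ U y).Nonempty) (hdisj : F.PairwiseDisjoint U) (hSF : S ⊆ F) :
    (G ∩ ⋃ y ∈ S, U y).ncard ≤ S.ncard := by
  choose! p hp using hmeet
  have hpinj : InjOn p F := fun y hy y' hy' hyy' =>
    hdisj.elim hy hy' (not_disjoint_iff.2 ⟨p y, (hp y hy).2, hyy' ▸ (hp y' hy').2⟩)
  have himage : p '' F = G :=
    eq_of_subset_of_ncard_le (image_subset_iff.2 fun y hy => (hp y hy).1)
      (hpinj.ncard_image ▸ hGF) hG
  have hS : S.Finite := hF.subset hSF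
  calc (G ∩ ⋃ y ∈ S, U y).ncard ≤ (p '' S).ncard := by
        refine ncard_le_ncard ?_ (hS.image p)
        rintro _ ⟨hg, hgS⟩
        rw [← himage] at hg
        obtain ⟨y', hy', rfl⟩ := hg
        obtain ⟨y, hy, hgy⟩ := mem_iUnion₂.1 hgS
        have : y = y' := hdisj.elim (hSF hy) hy' (not_disjoint_iff.2 ⟨p y', hgy, (hp y' hy').2⟩)
        exact ⟨y', this ▸ hy, rfl⟩
    _ ≤ S.ncard := ncard_image_le hS

namespace VCont

variable {X Z : Type*} [TopologicalSpace X] [TopologicalSpace Z] {f : X → Set Z} {x₀ : X}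
  {U : Set Z}

theorem eventually_subset (hf : VCont f) (hU : IsOpen U) (h : f x₀ ⊆ U) :
    ∀ᶠ x in 𝓝 x₀, f x ⊆ U :=
  (@Continuous.isOpen_preimage _ _ _ (vietoris Z) f hf _
    (TopologicalSpace.isOpen_generateFrom_of_mem (Or.inl ⟨U, hU, rfl⟩))).mem_nhds h

theorem eventually_inter_nonempty (hf : VCont f) (hU : IsOpen U) (h : (f x₀ ∩ U).Nonempty) :
    ∀ᶠ x in 𝓝 x₀, (f x ∩ U).Nonempty :=
  (@Continuous.isOpen_preimage _ _ _ (vietoris Z) f hf _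
    (TopologicalSpace.isOpen_generateFrom_of_mem (Or.inr ⟨U, hU, rfl⟩))).mem_nhds h

variable [T2Space Z] {π : Z → ℝ}

theorem eventually_ncard_maximizers_le (hf : VCont f) (hπ : Continuous π)
    (hfin : (f x₀).Finite)
    (hle : ∀ᶠ x in 𝓝 x₀, (f x).Finite ∧ (f x).ncard ≤ (f x₀).ncard) :
    ∀ᶠ x in 𝓝 x₀, (maximizers π (f x)).ncard ≤ (maximizers π (f x₀)).ncard := by
  set K := maximizers π (f x₀)
  obtain ⟨c, hcK, hcF⟩ := exists_level_between_maximizers (π := π) hfin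
  obtain ⟨U, hU, hdisj⟩ := hfin.t2_separation
  set W : Z → Set Z := fun y => U y ∩ π ⁻¹' (if c < π y then Ioi c else Iio c)
  have hWopen : ∀ y, IsOpen (W y) := fun y =>
    (hU y).2.inter (by split_ifs; exacts [isOpen_Ioi.preimage hπ, isOpen_Iio.preimage hπ])
  have hWmem : ∀ y ∈ f x₀, y ∈ W y := by
    intro y hy
    by_cases hyK : y ∈ K
    · simp [W, hcK y hyK, (hU y).1]
    · have := hcF y ⟨hy, hyK⟩
      simp [W, this, this.not_gt, (hU y).1]
  have hWdisj : (f x₀).PairwiseDisjoint W := hdisj.mono fun y => inter_subset_left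
  have hsub := hf.eventually_subset (isOpen_biUnion fun y _ => hWopen y)
    fun y hy => mem_biUnion hy (hWmem y hy)
  have hmeet := hfin.eventually_all.2 fun y hy =>
    hf.eventually_inter_nonempty (hWopen y) ⟨y, hy, hWmem y hy⟩
  filter_upwards [hle, hsub, hmeet] with x ⟨hGfin, hGF⟩ hcover hmeet
  refine le_trans (ncard_le_ncard ?_ (hGfin.inter_of_left _))
    (ncard_inter_biUnion_le hfin hGfin hGF hmeet hWdisj maximizers_subset)
  intro g hg
  obtain ⟨y', hy', hgy'⟩ := mem_iUnion₂.1 (hcover hg.1)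
  refine ⟨hg.1, mem_biUnion (?_ : y' ∈ K) hgy'⟩
  by_contra hy'K
  obtain ⟨y, hy⟩ := maximizers_nonempty (π := π) hfin ⟨y', hy'⟩
  obtain ⟨g₀, hg₀, hg₀y⟩ := hmeet y hy.1
  have hg_lt : π g < c := by
    have := hcF y' ⟨hy', hy'K⟩
    simpa [W, this.not_gt] using hgy'.2
  have hg₀_gt : c < π g₀ := by simpa [W, hcK y hy] using hg₀y.2
  have hg₀_le : π g₀ ≤ π g := le_of_mem_maximizers hGfin hg hg₀
  linarith

theorem isOpen_setOf_ncard_maximizers_lt {n : ℕ} (hf : VCont f) (hπ : Continuous π)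
    (hfin : ∀ x, (f x).Finite) (hcard : ∀ x, (f x).ncard = n) (k : ℕ) :
    IsOpen {x | (maximizers π (f x)).ncard < k} :=
  isOpen_iff_eventually.2 fun x₀ hx₀ =>
    (hf.eventually_ncard_maximizers_le hπ (hfin x₀) (.of_forall fun x =>
      ⟨hfin x, ((hcard x).trans (hcard x₀).symm).le⟩)).mono fun _ hx => hx.trans_lt hx₀

end VCont

theorem stmt7_general {m n m' : ℕ} (hm : 0 < m)
    (A : Set (EuclideanSpace ℝ (Fin m)))
    (f : A → Set (EuclideanSpace ℝ (Fin m)))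
    (hcard : ∀ x, (f x).Finite ∧ (f x).ncard = n)
    (hcont : VCont f) :
    IsOpen {x : A | {y ∈ f x | y ⟨0, hm⟩ = sSup ((fun z => z ⟨0, hm⟩) '' f x)}.ncard < n - m'} :=
  hcont.isOpen_setOf_ncard_maximizers_lt (by fun_prop) (fun x => (hcard x).1)
    (fun x => (hcard x).2) _

theorem stmt7 {m n m' : ℕ} (hm : 0 < m) (hn : 1 < n) (hm'1 : 1 ≤ m') (hm'n : m' ≤ n - 1)
    (A : Set (EuclideanSpace ℝ (Fin m))) (hA : IsClosed A)
    (f : A → Set (EuclideanSpace ℝ (Fin m)))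
    (hcard : ∀ x, (f x).Finite ∧ (f x).ncard = n)
    (hcont : VCont f) :
    IsOpen {x : A | {y ∈ f x | y ⟨0, hm⟩ = sSup ((fun z => z ⟨0, hm⟩) '' f x)}.ncard < n - m'} :=
  stmt7_general hm A f hcard hcont
end

section
/- Let f : ℝ → exp_2(ℝ) be continuous and fixed-point free, and define f₁(x) = min f(x) and f₂(x) = max f(x). Then f₁ and f₂ are continuous fixed-point free real-valued functions on ℝ, and if 𝓕₁ and 𝓕₂ are finite closed colorings of f₁ and f₂ respectively, then { A ∩ B : A ∈ 𝓕₁, B ∈ 𝓕₂ } is a finite closed coloring of f. -/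
open Set

/-!
For compact nonempty values, `min f(x) > a` iff `f x ⊆ (a, ∞)`, and `min f(x) < b` iff `f x`
meets `(-∞, b)`; both are Vietoris-open conditions, so `min ∘ f` (and dually `max ∘ f`) is
continuous. As `f x = {f₁ x, f₂ x}`, a point of `f x` lying in `A ∩ B` with `x ∈ A ∩ B` is
`f₁ x ∈ A` or `f₂ x ∈ B`, which the colors `A` of `f₁` and `B` of `f₂` forbid.
-/

theorem IsLeast.lt_iff_subset_Ioi {α : Type*} [Preorder α] {s : Set α} {m a : α}
    (h : IsLeast s m) : a < m ↔ s ⊆ Ioi a :=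
  ⟨fun ham _ hx => ham.trans_le (h.2 hx), fun hs => hs h.1⟩

theorem Set.subset_pair_csInf_csSup {α : Type*} [ConditionallyCompleteLinearOrder α]
    {s : Set α} (hne : s.Nonempty) (hfin : s.Finite) (hcard : s.ncard ≤ 2) :
    s ⊆ {sInf s, sSup s} := by
  intro a ha
  by_contra hmem
  simp only [mem_insert_iff, mem_singleton_iff, not_or] at hmem
  have hlt : sInf s < a := (csInf_le hfin.bddBelow ha).lt_of_ne' hmem.1
  have hgt : a < sSup s := (le_csSup hfin.bddAbove ha).lt_of_ne hmem.2
  exact hcard.not_gt <| (two_lt_ncard_iff hfin).2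
    ⟨_, _, _, hne.csInf_mem hfin, ha, hne.csSup_mem hfin, hlt.ne, (hlt.trans hgt).ne, hgt.ne⟩

theorem disjoint_inter_biUnion_of_subset_pair {X : Type*} {f : X → Set X} {g₁ g₂ : X → X}
    (hf : ∀ x, f x ⊆ {g₁ x, g₂ x}) {A B : Set X} (hA : Disjoint (g₁ '' A) A)
    (hB : Disjoint (g₂ '' B) B) : Disjoint (A ∩ B) (⋃ x ∈ A ∩ B, f x) := by
  refine disjoint_left.2 fun y ⟨hyA, hyB⟩ hy => ?_
  obtain ⟨x, ⟨hxA, hxB⟩, hyx⟩ := mem_iUnion₂.1 hy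
  rcases hf x hyx with rfl | rfl
  · exact disjoint_left.1 hA (mem_image_of_mem g₁ hxA) hyA
  · exact disjoint_left.1 hB (mem_image_of_mem g₂ hxB) hyB

namespace VCont

section

variable {X Z : Type*} [TopologicalSpace X] [TopologicalSpace Z] {f : X → Set Z}

theorem isOpen_setOf_subset (hf : VCont f) {U : Set Z} (hU : IsOpen U) :
    IsOpen {x | f x ⊆ U} :=
  @Continuous.isOpen_preimage _ _ _ (vietoris Z) f hf _ (.basic _ (.inl ⟨U, hU, rfl⟩))

theorem isOpen_setOf_inter_nonempty (hf : VCont f) {U : Set Z} (hU : IsOpen U) :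
    IsOpen {x | (f x ∩ U).Nonempty} :=
  @Continuous.isOpen_preimage _ _ _ (vietoris Z) f hf _ (.basic _ (.inr ⟨U, hU, rfl⟩))

end

variable {X α : Type*} [TopologicalSpace X] [ConditionallyCompleteLinearOrder α]
  [TopologicalSpace α] [OrderTopology α] {f : X → Set α}

theorem continuous_sInf (hf : VCont f) (hne : ∀ x, (f x).Nonempty) (hc : ∀ x, IsCompact (f x)) :
    Continuous fun x => sInf (f x) := by
  refine continuous_iff_lower_upperSemicontinuous.2
    ⟨lowerSemicontinuous_iff_isOpen_preimage.2 fun a => ?_,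
      upperSemicontinuous_iff_isOpen_preimage.2 fun b => ?_⟩
  · have hpre : (fun x => sInf (f x)) ⁻¹' Ioi a = {x | f x ⊆ Ioi a} :=
      ext fun x => ((hc x).isLeast_sInf (hne x)).lt_iff_subset_Ioi
    exact hpre ▸ hf.isOpen_setOf_subset isOpen_Ioi
  · have hpre : (fun x => sInf (f x)) ⁻¹' Iio b = {x | (f x ∩ Iio b).Nonempty} :=
      ext fun x => isGLB_lt_iff ((hc x).isGLB_sInf (hne x))
    exact hpre ▸ hf.isOpen_setOf_inter_nonempty isOpen_Iio

theorem continuous_sSup (hf : VCont f) (hne : ∀ x, (f x).Nonempty) (hc : ∀ x, IsCompact (f x)) :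
    Continuous fun x => sSup (f x) :=
  continuous_sInf (α := αᵒᵈ) hf hne hc

end VCont

theorem stmt14 (f : ℝ → Set ℝ)
    (hval : ∀ x, (f x).Nonempty ∧ (f x).Finite ∧ (f x).ncard ≤ 2)
    (hcont : VCont f)
    (hfree : ∀ x, x ∉ f x) :
    Continuous (fun x => sInf (f x)) ∧ Continuous (fun x => sSup (f x)) ∧
    (∀ x, sInf (f x) ≠ x) ∧ (∀ x, sSup (f x) ≠ x) ∧
    ∀ 𝓕₁ 𝓕₂ : Finset (Set ℝ),
      ((∀ x : ℝ, ∃ C ∈ 𝓕₁, x ∈ C) ∧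
        ∀ C ∈ 𝓕₁, IsClosed C ∧ Disjoint ((fun x => sInf (f x)) '' C) C) →
      ((∀ x : ℝ, ∃ C ∈ 𝓕₂, x ∈ C) ∧
        ∀ C ∈ 𝓕₂, IsClosed C ∧ Disjoint ((fun x => sSup (f x)) '' C) C) →
      ∀ 𝓕 : Finset (Set ℝ),
        (∀ S : Set ℝ, S ∈ 𝓕 ↔ ∃ A ∈ 𝓕₁, ∃ B ∈ 𝓕₂, S = A ∩ B) →
        (∀ x : ℝ, ∃ F ∈ 𝓕, x ∈ F) ∧
          ∀ F ∈ 𝓕, IsClosed F ∧ Disjoint F (⋃ x ∈ F, f x) := by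
  have hne x := (hval x).1
  have hcpt x : IsCompact (f x) := (hval x).2.1.isCompact
  have hpair x : f x ⊆ {sInf (f x), sSup (f x)} :=
    subset_pair_csInf_csSup (hval x).1 (hval x).2.1 (hval x).2.2
  refine ⟨hcont.continuous_sInf hne hcpt, hcont.continuous_sSup hne hcpt,
    fun x => ne_of_mem_of_not_mem ((hcpt x).sInf_mem (hne x)) (hfree x),
    fun x => ne_of_mem_of_not_mem ((hcpt x).sSup_mem (hne x)) (hfree x), ?_⟩
  rintro 𝓕₁ 𝓕₂ ⟨hcov₁, hcol₁⟩ ⟨hcov₂, hcol₂⟩ 𝓕 h𝓕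
  refine ⟨fun x => ?_, fun F hF => ?_⟩
  · obtain ⟨A, hA, hxA⟩ := hcov₁ x
    obtain ⟨B, hB, hxB⟩ := hcov₂ x
    exact ⟨A ∩ B, (h𝓕 _).2 ⟨A, hA, B, hB, rfl⟩, hxA, hxB⟩
  · obtain ⟨A, hA, B, hB, rfl⟩ := (h𝓕 F).1 hF
    exact ⟨(hcol₁ A hA).1.inter (hcol₂ B hB).1,
      disjoint_inter_biUnion_of_subset_pair hpair (hcol₁ A hA).2 (hcol₂ B hB).2⟩
end
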